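/- Let φ ∈ 𝒫 and let c₁, c₂ ≥ 0 with c := max{c₁, c₂}. Let t₀ ∈ ℝ, (tᵢ) an impulse time sequence, and let v: [t₀,∞) → [0,∞) be impulsive-regular and satisfy: D⁺v(t) ≤ −φ(v(t)) at every non-impulse time t with v(t) ≥ c₁; v(tᵢ) ≤ v(tᵢ⁻) at every impulse time tᵢ with v(tᵢ⁻) ≥ c₁; and v(tᵢ) ≤ c₂ at every impulse time tᵢ with v(tᵢ⁻) < c₁. If v(t∗) ≤ c for some t∗ ≥ t₀, then v(t) ≤ c for all t ≥ t∗. -/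

import Mathlib

open Filter Topology Set MeasureTheory

noncomputable section

/-- Class 𝒦: continuous, strictly increasing on `[0,∞)`, vanishing at `0`. -/
def ClassK (γ : ℝ → ℝ) : Prop :=
  ContinuousOn γ (Set.Ici 0) ∧ StrictMonoOn γ (Set.Ici 0) ∧ γ 0 = 0

/-- Class 𝒦∞: class 𝒦 and unbounded. -/
def ClassKInf (γ : ℝ → ℝ) : Prop :=
  ClassK γ ∧ Filter.Tendsto γ Filter.atTop Filter.atTop

/-- Class 𝒦ℒ. -/
def ClassKL (β : ℝ → ℝ → ℝ) : Prop :=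
  (∀ s, 0 ≤ s → ClassK (fun r => β r s)) ∧
  (∀ r, 0 ≤ r → AntitoneOn (fun s => β r s) (Set.Ici 0) ∧
    Filter.Tendsto (fun s => β r s) Filter.atTop (nhds 0))

/-- Class 𝒫: continuous, positive definite. -/
def ClassP (φ : ℝ → ℝ) : Prop :=
  ContinuousOn φ (Set.Ici 0) ∧ φ 0 = 0 ∧ ∀ r, 0 < r → 0 < φ r

/-- Upper right Dini derivative `D⁺v(t) = limsup_{s→0⁺} (v(t+s) − v(t))/s`, valued in `EReal`. -/
def DiniUpper (v : ℝ → ℝ) (t : ℝ) : EReal :=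
  Filter.limsup (fun s => (((v (t + s) - v t) / s : ℝ) : EReal)) (nhdsWithin 0 (Set.Ioi 0))

/-- Impulse time sequence with initial time `t₀ = τ 0`: strictly increasing and tending to `∞`;
the impulse times are `τ i` for `i ≥ 1`. -/
def IsImpulseSeq (t₀ : ℝ) (τ : ℕ → ℝ) : Prop :=
  τ 0 = t₀ ∧ StrictMono τ ∧ Filter.Tendsto τ Filter.atTop Filter.atTop

/-- The set `S = {tᵢ : i ≥ 1}` of impulse times. -/
def impulseSet (τ : ℕ → ℝ) : Set ℝ := {s | ∃ i : ℕ, 1 ≤ i ∧ τ i = s}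

/-- Impulsive-regular function on `[t₀,∞)`: right-continuous everywhere, continuous (within
`[t₀,∞)`) at every non-impulse time, and left limits exist at every impulse time. -/
def ImpulsiveRegular (t₀ : ℝ) (τ : ℕ → ℝ) (v : ℝ → ℝ) : Prop :=
  (∀ t, t₀ ≤ t → ContinuousWithinAt v (Set.Ici t) t) ∧
  (∀ t, t₀ ≤ t → t ∉ impulseSet τ → ContinuousWithinAt v (Set.Ici t₀) t) ∧
  (∀ i : ℕ, 1 ≤ i → ∃ L : ℝ, Filter.Tendsto v (nhdsWithin (τ i) (Set.Iio (τ i))) (nhds L))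

/-!
Let `T` be the first time after `t*` at which `v` exceeds `c = max c₁ c₂`. Approaching `T` from
the left, `v ≤ c`; so `v T ≤ c`, by continuity if `T` is not an impulse time, and by the two jump
conditions if it is. Impulse times do not accumulate, so `v` is continuous on some `[T, u]`, and on
that interval `D⁺v ≤ -φ(v) < 0` wherever `v > c ≥ c₁ ≥ 0`; a continuous function whose Dini
derivative is nonpositive above the level `c` cannot cross that level upward. This contradicts the
choice of `T`.
-/

lemma eventually_slope_lt_of_diniUpper_lt {v : ℝ → ℝ} {x r : ℝ} (h : DiniUpper v x < r) :
    ∀ᶠ z in 𝓝[>] x, slope v x z < r := by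
  have hs : ∀ᶠ s in 𝓝[>] (0 : ℝ), (v (x + s) - v x) / s < r := by
    simpa using eventually_lt_of_limsup_lt h
  have hmap : 𝓝[>] x = map (x + ·) (𝓝[>] 0) := by simp
  rw [hmap, eventually_map]
  filter_upwards [hs] with s hs
  simpa [slope_def_field] using hs

lemma le_left_of_diniUpper_nonpos {v : ℝ → ℝ} {a b : ℝ} (hab : a ≤ b)
    (hv : ContinuousOn v (Icc a b)) (hD : ∀ x ∈ Ico a b, DiniUpper v x ≤ 0) : v b ≤ v a :=
  image_le_of_liminf_slope_right_le_deriv_boundary (B := fun _ => v a) (B' := fun _ => 0) hv le_rfl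
    continuousOn_const (fun x _ => hasDerivWithinAt_const x _ (v a))
    (fun x hx _ hr => (eventually_slope_lt_of_diniUpper_lt
      ((hD x hx).trans_lt (EReal.coe_lt_coe_iff.2 hr))).frequently) ⟨hab, le_rfl⟩

lemma le_of_left_le_of_diniUpper_nonpos {v : ℝ → ℝ} {a b c : ℝ} (hab : a ≤ b)
    (hv : ContinuousOn v (Icc a b)) (ha : v a ≤ c)
    (hD : ∀ x ∈ Ioo a b, c < v x → DiniUpper v x ≤ 0) : v b ≤ c := by
  by_contra! hb
  set E := Icc a b ∩ v ⁻¹' Iic c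
  have hE : IsCompact E :=
    isCompact_Icc.of_isClosed_subset (hv.preimage_isClosed_of_isClosed isClosed_Icc isClosed_Iic)
      inter_subset_left
  obtain ⟨T, ⟨hTab, hvT⟩, hTmax⟩ := hE.exists_isGreatest ⟨a, ⟨le_rfl, hab⟩, ha⟩
  have hTb : T < b := hTab.2.lt_of_ne (by rintro rfl; exact hb.not_ge hvT)
  -- after its last visit `T` to the sublevel set, `v` stays above `c` and hence does not increase
  have hafter : ∀ x ∈ Ioc T b, c < v x := fun x hx =>
    not_le.1 fun hvx => (hTmax ⟨⟨hTab.1.trans hx.1.le, hx.2⟩, hvx⟩).not_gt hx.1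
  have hdecr : ∀ x ∈ Ioc T b, v b ≤ v x := fun x hx =>
    le_left_of_diniUpper_nonpos hx.2 (hv.mono (Icc_subset_Icc (hTab.1.trans hx.1.le) le_rfl))
      fun y hy => hD y ⟨hTab.1.trans_lt (hx.1.trans_le hy.1), hy.2⟩
        (hafter y ⟨hx.1.trans_le hy.1, hy.2.le⟩)
  have hcont : Tendsto v (𝓝[>] T) (𝓝 (v T)) :=
    (hv T (Ico_subset_Icc_self ⟨hTab.1, hTb⟩)).mono_of_mem_nhdsWithin
      (Icc_mem_nhdsGT_of_mem ⟨hTab.1, hTb⟩)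
  exact hb.not_ge ((ge_of_tendsto hcont (mem_of_superset (Ioc_mem_nhdsGT hTb) hdecr)).trans hvT)

lemma Filter.Tendsto.eventually_notMem_range_nhdsNE {τ : ℕ → ℝ} (hτ : Tendsto τ atTop atTop)
    (T : ℝ) : ∀ᶠ s in 𝓝[≠] T, s ∉ range τ := by
  have hfin : {i | τ i ≤ T + 1}.Finite := by
    simpa [← Nat.cofinite_eq_atTop] using hτ.eventually_gt_atTop (T + 1)
  have hF : (τ '' {i | τ i ≤ T + 1} \ {T})ᶜ ∈ 𝓝 T :=
    ((hfin.image τ).sdiff).isClosed.compl_mem_nhds (by simp)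
  filter_upwards [nhdsWithin_le_nhds hF, nhdsWithin_le_nhds (Iio_mem_nhds (lt_add_one T)),
    self_mem_nhdsWithin] with s hsF hs hsT
  rintro ⟨i, rfl⟩
  exact hsF ⟨mem_image_of_mem τ (mem_Iio.1 hs).le, hsT⟩

lemma IsImpulseSeq.exists_Ioo_notMem_impulseSet {t₀ : ℝ} {τ : ℕ → ℝ} (hτ : IsImpulseSeq t₀ τ)
    (T : ℝ) : ∃ u ∈ Ioi T, Ioo T u ⊆ (impulseSet τ)ᶜ := by
  have h : ∀ᶠ x in 𝓝[>] T, x ∉ range τ :=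
    nhdsWithin_mono T (fun _ hx => ne_of_gt hx) (hτ.2.2.eventually_notMem_range_nhdsNE T)
  exact mem_nhdsGT_iff_exists_Ioo_subset.1 (h.mono fun x hx ⟨i, _, hi⟩ => hx ⟨i, hi⟩)

section ImpulsiveRegular

variable {t₀ : ℝ} {τ : ℕ → ℝ} {v : ℝ → ℝ}

lemma ImpulsiveRegular.continuousOn_Icc (hreg : ImpulsiveRegular t₀ τ v) {a b : ℝ}
    (ha : t₀ ≤ a) (himp : Ioc a b ⊆ (impulseSet τ)ᶜ) : ContinuousOn v (Icc a b) := by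
  intro x hx
  rcases hx.1.eq_or_lt with rfl | hax
  · exact (hreg.1 _ ha).mono Icc_subset_Ici_self
  · exact ((hreg.2.1 x (ha.trans hax.le) (himp ⟨hax, hx.2⟩)).continuousAt
      (Ici_mem_nhds (ha.trans_lt hax))).continuousWithinAt

lemma ImpulsiveRegular.le_max_of_forall_Ioo_le (hreg : ImpulsiveRegular t₀ τ v) {c₁ c₂ : ℝ}
    (hjump : ∀ i : ℕ, 1 ≤ i → c₁ ≤ Function.leftLim v (τ i) →
      v (τ i) ≤ Function.leftLim v (τ i))
    (hjumpsmall : ∀ i : ℕ, 1 ≤ i → Function.leftLim v (τ i) < c₁ → v (τ i) ≤ c₂)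
    {a T : ℝ} (ha : t₀ ≤ a) (haT : a < T) (hle : ∀ x ∈ Ioo a T, v x ≤ max c₁ c₂) :
    v T ≤ max c₁ c₂ := by
  have hleft : ∀ᶠ x in 𝓝[<] T, v x ≤ max c₁ c₂ := mem_of_superset (Ioo_mem_nhdsLT haT) hle
  by_cases hT : T ∈ impulseSet τ
  · obtain ⟨i, hi, rfl⟩ := hT
    obtain ⟨L, hL⟩ := hreg.2.2 i hi
    have hLc : Function.leftLim v (τ i) ≤ max c₁ c₂ :=
      leftLim_eq_of_tendsto hL ▸ le_of_tendsto hL hleft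
    rcases le_or_gt c₁ (Function.leftLim v (τ i)) with h | h
    · exact (hjump i hi h).trans hLc
    · exact (hjumpsmall i hi h).trans (le_max_right _ _)
  · exact le_of_tendsto (((hreg.2.1 T (ha.trans haT.le) hT).continuousAt
      (Ici_mem_nhds (ha.trans_lt haT))).tendsto.mono_left nhdsWithin_le_nhds) hleft

end ImpulsiveRegular

theorem sublevelForwardInvariance_general
    (φ : ℝ → ℝ) (hφ : ClassP φ)
    (c₁ c₂ : ℝ) (hc₁ : 0 ≤ c₁)
    (t₀ : ℝ) (τ : ℕ → ℝ) (hτ : IsImpulseSeq t₀ τ)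
    (v : ℝ → ℝ)
    (hreg : ImpulsiveRegular t₀ τ v)
    (hflow : ∀ t, t₀ ≤ t → t ∉ impulseSet τ → c₁ ≤ v t →
      DiniUpper v t ≤ (((-φ (v t)) : ℝ) : EReal))
    (hjump : ∀ i : ℕ, 1 ≤ i → c₁ ≤ Function.leftLim v (τ i) →
      v (τ i) ≤ Function.leftLim v (τ i))
    (hjumpsmall : ∀ i : ℕ, 1 ≤ i → Function.leftLim v (τ i) < c₁ → v (τ i) ≤ c₂)
    (tstar : ℝ) (hts : t₀ ≤ tstar) (hvts : v tstar ≤ max c₁ c₂) :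
    ∀ t, tstar ≤ t → v t ≤ max c₁ c₂ := by
  intro t ht
  by_contra! hvt
  set B := {s | tstar ≤ s ∧ max c₁ c₂ < v s}
  have hBne : B.Nonempty := ⟨t, ht, hvt⟩
  have hBbdd : BddBelow B := ⟨tstar, fun s hs => hs.1⟩
  have htsT : tstar ≤ sInf B := le_csInf hBne fun s hs => hs.1
  have hvT : v (sInf B) ≤ max c₁ c₂ := by
    rcases htsT.eq_or_lt with h | h
    · exact h ▸ hvts
    · exact hreg.le_max_of_forall_Ioo_le hjump hjumpsmall hts h fun x hx =>
        not_lt.1 fun hvx => (csInf_le hBbdd ⟨hx.1.le, hvx⟩).not_gt hx.2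
  obtain ⟨u, hTu, hu⟩ := hτ.exists_Ioo_notMem_impulseSet (sInf B)
  obtain ⟨s, hsB, hsu⟩ := exists_lt_of_csInf_lt hBne hTu
  have hnoimp : Ioc (sInf B) s ⊆ (impulseSet τ)ᶜ := fun x hx => hu ⟨hx.1, hx.2.trans_lt hsu⟩
  have hD : ∀ x ∈ Ioo (sInf B) s, max c₁ c₂ < v x → DiniUpper v x ≤ 0 := fun x hx hvx =>
    (hflow x (hts.trans (htsT.trans hx.1.le)) (hnoimp (Ioo_subset_Ioc_self hx))
      ((le_max_left _ _).trans hvx.le)).trans (EReal.coe_nonpos.2 (neg_nonpos.2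
        (hφ.2.2 _ (hc₁.trans_lt ((le_max_left _ _).trans_lt hvx))).le))
  exact hsB.2.not_ge (le_of_left_le_of_diniUpper_nonpos (csInf_le hBbdd hsB)
    (hreg.continuousOn_Icc (hts.trans htsT) hnoimp) hvT hD)

/-- forward invariance of the sublevel set `{v ≤ max{c₁, c₂}}` along an impulsive
trajectory of the Lyapunov value. -/
theorem sublevelForwardInvariance
    (φ : ℝ → ℝ) (hφ : ClassP φ)
    (c₁ c₂ : ℝ) (hc₁ : 0 ≤ c₁) (hc₂ : 0 ≤ c₂)
    (t₀ : ℝ) (τ : ℕ → ℝ) (hτ : IsImpulseSeq t₀ τ)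
    (v : ℝ → ℝ) (hvnn : ∀ t, t₀ ≤ t → 0 ≤ v t)
    (hreg : ImpulsiveRegular t₀ τ v)
    (hflow : ∀ t, t₀ ≤ t → t ∉ impulseSet τ → c₁ ≤ v t →
      DiniUpper v t ≤ (((-φ (v t)) : ℝ) : EReal))
    (hjump : ∀ i : ℕ, 1 ≤ i → c₁ ≤ Function.leftLim v (τ i) →
      v (τ i) ≤ Function.leftLim v (τ i))
    (hjumpsmall : ∀ i : ℕ, 1 ≤ i → Function.leftLim v (τ i) < c₁ → v (τ i) ≤ c₂)
    (tstar : ℝ) (hts : t₀ ≤ tstar) (hvts : v tstar ≤ max c₁ c₂) :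
    ∀ t, tstar ≤ t → v t ≤ max c₁ c₂ :=
  sublevelForwardInvariance_general φ hφ c₁ c₂ hc₁ t₀ τ hτ v hreg hflow hjump hjumpsmall tstar hts
    hvts
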